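/- Let P(q,t) = qt^3/(1-q^2 t^2) · ∏_{j≥0} 1/(1 - q^{2^j-1} t^{2^j}) and F(q) = q/(1-q^2) · ∏_{j≥1} 1/(1 - q^{2^j-1}) in ℤ[[q]][[t]] and ℤ[[q]] respectively. Then for every i ≥ 0, the coefficient of q^i t^n in P stabilizes as n → ∞ over odd n: for all odd n with n ≥ 2i + 3, the coefficient of q^i t^n in P equals the coefficient of q^i in F. -/

import Mathlib

/-- The variable `q` in `ℤ⟦q⟧⟦t⟧`. -/
noncomputable def qv : PowerSeries (PowerSeries ℤ) :=
  PowerSeries.C (R := PowerSeries ℤ) PowerSeries.X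

/-- The variable `t` in `ℤ⟦q⟧⟦t⟧`. -/
noncomputable def tv : PowerSeries (PowerSeries ℤ) := PowerSeries.X

/-- The inverse `1/(1 - q^(2^j-1) t^(2^j))` in `ℤ⟦q⟧⟦t⟧`. -/
noncomputable def factorInv (j : ℕ) : PowerSeries (PowerSeries ℤ) :=
  PowerSeries.invOfUnit (1 - qv ^ (2 ^ j - 1) * tv ^ (2 ^ j)) 1

/-- The infinite product `∏_{j ≥ 0} 1/(1 - q^(2^j-1) t^(2^j))`, interpreted as the t-adic
limit of partial products: the coefficient of `t^n` is that of any sufficiently large partial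
product (factors with `2^j > n` do not affect coefficients of `t`-degree `≤ n`). -/
noncomputable def prodQT : PowerSeries (PowerSeries ℤ) :=
  PowerSeries.mk fun n =>
    PowerSeries.coeff (R := PowerSeries ℤ) n (∏ j ∈ Finset.range (n + 1), factorInv j)

/-- The series `P(q,t) = q t^3/(1 - q^2 t^2) · ∏_{j≥0} 1/(1 - q^(2^j-1) t^(2^j))`. -/
noncomputable def Pqt : PowerSeries (PowerSeries ℤ) :=
  qv * tv ^ 3 * PowerSeries.invOfUnit (1 - qv ^ 2 * tv ^ 2) 1 * prodQT

/-- The coefficient of `q^i t^n` in a two-variable series. -/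
noncomputable def coeffQT (f : PowerSeries (PowerSeries ℤ)) (i n : ℕ) : ℤ :=
  PowerSeries.coeff (R := ℤ) i (PowerSeries.coeff (R := PowerSeries ℤ) n f)

/-- The inverse of `1 - q^k` in `ℤ⟦q⟧` (geometric series), for `k ≥ 1`. -/
noncomputable def geomInv (k : ℕ) : PowerSeries ℤ :=
  PowerSeries.invOfUnit (1 - (PowerSeries.X : PowerSeries ℤ) ^ k) 1

/-- The infinite product `∏_{j ≥ 1} 1/(1 - q^(2^j - 1))`, interpreted as the q-adic limit of
partial products: its `m`-th coefficient is the `m`-th coefficient of any sufficiently large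
partial product (factors with `2^j - 1 > m` do not affect coefficients of degree `≤ m`). -/
noncomputable def prodStable : PowerSeries ℤ :=
  PowerSeries.mk fun m =>
    PowerSeries.coeff (R := ℤ) m (∏ j ∈ Finset.range (m + 1), geomInv (2 ^ (j + 1) - 1))

/-- The stable Poincaré series `F(q) = q/(1-q^2) · ∏_{j≥1} 1/(1 - q^(2^j-1))`. -/
noncomputable def Fser : PowerSeries ℤ :=
  PowerSeries.X * PowerSeries.invOfUnit (1 - (PowerSeries.X : PowerSeries ℤ) ^ 2) 1 * prodStable


/-! The factor `j = 0` of `P` is `1/(1 - t)`, so the coefficient of `t ^ n` in `P = Q/(1 - t)` is the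
sum of the coefficients of `t ^ m`, `m ≤ n`, in the remaining product `Q`. Each factor of `Q` has
`t`-degree at most twice its `q`-degree (plus one for `q t ^ 3`), so the coefficient of `q ^ i t ^ m`
in `Q` vanishes for `m > 2 i + 1`, and for `n ≥ 2 i + 1` the sum is the coefficient of `q ^ i` in
`Q(q, 1) = F(q)`. The evaluation at `t = 1` is pushed through the product one factor at a time: both
`g = f / (1 - q ^ a t ^ b)` and its value satisfy the recursion `g = f + q ^ a t ^ b g`, which is
compatible with the degree bound as long as `b ≤ 2 a`. -/

open PowerSeries Finset

section General

variable {R : Type*} [CommRing R]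

theorem mul_invOfUnit_one_sub_eq (h : R⟦X⟧) {u : R⟦X⟧} (hu : constantCoeff u = 0) :
    h * invOfUnit (1 - u) 1 = h + u * (h * invOfUnit (1 - u) 1) := by
  have hinv : (1 - u) * invOfUnit (1 - u) 1 = 1 := mul_invOfUnit _ 1 (by simp [hu])
  linear_combination h * hinv

theorem X_pow_dvd_invOfUnit_one_sub_sub_one {u : R⟦X⟧} {b : ℕ} (hu : X ^ b ∣ u) :
    X ^ b ∣ invOfUnit (1 - u) 1 - 1 := by
  rcases Nat.eq_zero_or_pos b with rfl | hb
  · simp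
  have hu₀ : constantCoeff u = 0 := X_dvd_iff.1 ((dvd_pow_self X hb.ne').trans hu)
  have h := mul_invOfUnit_one_sub_eq 1 hu₀
  rw [one_mul] at h
  rw [h, add_sub_cancel_left]
  exact hu.mul_right _

theorem coeff_eq_of_X_pow_dvd_sub {f g : R⟦X⟧} {m N : ℕ} (h : X ^ N ∣ f - g) (hm : m < N) :
    coeff m f = coeff m g :=
  sub_eq_zero.1 (by rw [← map_sub]; exact X_pow_dvd_iff.1 h m hm)

theorem X_pow_dvd_prod_range_sub_prod_range {f : ℕ → R⟦X⟧} (hf : ∀ j, X ^ j ∣ f j - 1)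
    {N K : ℕ} (hNK : N ≤ K) : X ^ N ∣ ∏ j ∈ range K, f j - ∏ j ∈ range N, f j := by
  induction K, hNK using Nat.le_induction with
  | base => simp
  | succ K hNK ih =>
    have hsplit : ∏ j ∈ range (K + 1), f j - ∏ j ∈ range N, f j
        = (∏ j ∈ range K, f j - ∏ j ∈ range N, f j) + (∏ j ∈ range K, f j) * (f K - 1) := by
      rw [prod_range_succ]; ring
    rw [hsplit]
    exact dvd_add ih (((pow_dvd_pow X hNK).trans (hf K)).mul_left _)

theorem X_pow_dvd_mk_coeff_prod_range_sub {f : ℕ → R⟦X⟧} (hf : ∀ j, X ^ j ∣ f j - 1) (N : ℕ) :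
    X ^ N ∣ PowerSeries.mk (fun m ↦ coeff m (∏ j ∈ range (m + 1), f j)) - ∏ j ∈ range N, f j := by
  refine X_pow_dvd_iff.2 fun m hm ↦ ?_
  rw [map_sub, coeff_mk, sub_eq_zero]
  exact (coeff_eq_of_X_pow_dvd_sub (X_pow_dvd_prod_range_sub_prod_range hf hm)
    (Nat.lt_succ_self m)).symm

theorem coeff_mul_invOfUnit_one_sub_X (h : R⟦X⟧) (n : ℕ) :
    coeff n (h * invOfUnit (1 - X) 1) = ∑ m ∈ range (n + 1), coeff m h := by
  induction n with
  | zero => simp [coeff_zero_eq_constantCoeff_apply]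
  | succ n ih =>
    rw [mul_invOfUnit_one_sub_eq h (by simp), map_add, coeff_succ_X_mul, ih,
      sum_range_succ _ (n + 1), add_comm]

theorem sum_range_coeff_X_pow_mul (h : R⟦X⟧) (b M : ℕ) :
    ∑ m ∈ range M, coeff m (X ^ b * h) = ∑ m ∈ range (M - b), coeff m h := by
  induction M with
  | zero => simp
  | succ M ih =>
    rw [sum_range_succ, ih, coeff_X_pow_mul']
    split_ifs with hb
    · rw [show M + 1 - b = M - b + 1 by omega, sum_range_succ]
    · rw [add_zero, show M + 1 - b = M - b by omega]

/-- `f ∈ R⟦q⟧⟦t⟧` has no monomial `q ^ e t ^ m` with `m > 2 e + c`, and `f(q, 1) = u`. Only the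
second half is written out: the first follows by comparing the sums for `M = m` and `M = m + 1`. -/
def HasValueAtOne (c : ℕ) (f : R⟦X⟧⟦X⟧) (u : R⟦X⟧) : Prop :=
  ∀ ⦃e M : ℕ⦄, 2 * e + c < M → coeff e (∑ m ∈ range M, coeff m f) = coeff e u

theorem hasValueAtOne_C_X_pow_mul_X_pow {a b c : ℕ} (hb : b ≤ 2 * a + c) :
    HasValueAtOne c (C (X ^ a : R⟦X⟧) * X ^ b) (X ^ a) := by
  intro e M hM
  simp only [coeff_C_mul_X_pow, sum_ite_eq', mem_range]
  split_ifs with hbM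
  · rfl
  · rw [map_zero, coeff_X_pow, if_neg (by omega)]

theorem HasValueAtOne.mul_invOfUnit {c a b : ℕ} {f : R⟦X⟧⟦X⟧} {u : R⟦X⟧}
    (hf : HasValueAtOne c f u) (ha : 0 < a) (hb : 0 < b) (hab : b ≤ 2 * a) :
    HasValueAtOne c (f * invOfUnit (1 - C (X ^ a) * X ^ b) 1) (u * invOfUnit (1 - X ^ a) 1) := by
  set g := f * invOfUnit (1 - C (X ^ a) * X ^ b) 1
  set v := u * invOfUnit (1 - X ^ a) 1
  have hg : g = f + C (X ^ a) * (X ^ b * g) := by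
    rw [← mul_assoc]
    exact mul_invOfUnit_one_sub_eq f (by simp [hb.ne'])
  have hv : v = u + X ^ a * v := mul_invOfUnit_one_sub_eq u (by simp [ha.ne'])
  intro e
  induction e using Nat.strong_induction_on with
  | _ e ih =>
    intro M hM
    have hsum : ∑ m ∈ range M, coeff m g
        = ∑ m ∈ range M, coeff m f + X ^ a * ∑ m ∈ range (M - b), coeff m g := by
      conv_lhs => rw [hg]
      simp only [map_add, coeff_C_mul, sum_add_distrib, ← mul_sum, sum_range_coeff_X_pow_mul]
    rw [hsum, map_add, hf hM, coeff_X_pow_mul', hv, map_add, coeff_X_pow_mul']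
    split_ifs with hae
    · rw [ih (e - a) (by omega) (by omega)]
    · rfl

end General

theorem qv_pow_mul_tv_pow (a b : ℕ) : qv ^ a * tv ^ b = C (X ^ a : ℤ⟦X⟧) * X ^ b := by
  rw [qv, tv, map_pow]

theorem X_pow_dvd_factorInv_sub_one (j : ℕ) : X ^ j ∣ factorInv j - 1 :=
  (pow_dvd_pow X Nat.lt_two_pow_self.le).trans
    (X_pow_dvd_invOfUnit_one_sub_sub_one (dvd_mul_left _ _))

theorem X_pow_dvd_prodQT_sub (N : ℕ) : X ^ N ∣ prodQT - ∏ j ∈ range N, factorInv j :=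
  X_pow_dvd_mk_coeff_prod_range_sub X_pow_dvd_factorInv_sub_one N

theorem X_pow_dvd_prodStable_sub (N : ℕ) :
    X ^ N ∣ prodStable - ∏ j ∈ range N, geomInv (2 ^ (j + 1) - 1) := by
  refine X_pow_dvd_mk_coeff_prod_range_sub (fun j ↦ ?_) N
  have hj : j ≤ 2 ^ (j + 1) - 1 := by
    have := Nat.lt_two_pow_self (n := j + 1)
    omega
  exact (pow_dvd_pow X hj).trans (X_pow_dvd_invOfUnit_one_sub_sub_one dvd_rfl)

theorem hasValueAtOne_partial_product (k : ℕ) :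
    HasValueAtOne 1
      (qv * tv ^ 3 * invOfUnit (1 - qv ^ 2 * tv ^ 2) 1 * ∏ j ∈ range k, factorInv (j + 1))
      (X * geomInv 2 * ∏ j ∈ range k, geomInv (2 ^ (j + 1) - 1)) := by
  induction k with
  | zero =>
    have h := (hasValueAtOne_C_X_pow_mul_X_pow (R := ℤ) (a := 1) (b := 3) (c := 1)
      (by norm_num)).mul_invOfUnit (a := 2) (b := 2) (by norm_num) (by norm_num) (by norm_num)
    rw [prod_range_zero, prod_range_zero, mul_one, mul_one, qv_pow_mul_tv_pow, geomInv]
    simpa only [qv, tv, pow_one] using h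
  | succ k ih =>
    have h2 := Nat.one_lt_two_pow (n := k + 1) (by omega)
    rw [prod_range_succ, prod_range_succ, ← mul_assoc, ← mul_assoc, factorInv,
      geomInv.eq_1 (2 ^ (k + 1) - 1), qv_pow_mul_tv_pow (2 ^ (k + 1) - 1)]
    exact ih.mul_invOfUnit (by omega) (by omega) (by omega)

theorem coeff_stabilizes_general (i n : ℕ) (h : 2 * i + 3 ≤ n) :
    coeffQT Pqt i n = PowerSeries.coeff (R := ℤ) i Fser := by
  set H := qv * tv ^ 3 * invOfUnit (1 - qv ^ 2 * tv ^ 2) 1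
  have hP : coeff n Pqt = coeff n (H * (∏ j ∈ range n, factorInv (j + 1)) * factorInv 0) := by
    rw [mul_assoc, ← prod_range_succ']
    refine coeff_eq_of_X_pow_dvd_sub ?_ (Nat.lt_succ_self n)
    rw [Pqt, ← mul_sub]
    exact (X_pow_dvd_prodQT_sub (n + 1)).mul_left H
  have hF : coeff i Fser = coeff i (X * geomInv 2 * ∏ j ∈ range n, geomInv (2 ^ (j + 1) - 1)) := by
    refine coeff_eq_of_X_pow_dvd_sub ?_ (Nat.lt_succ_self i)
    rw [Fser, ← geomInv, ← mul_sub]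
    exact ((pow_dvd_pow X (by omega)).trans (X_pow_dvd_prodStable_sub n)).mul_left _
  have hfactor₀ : factorInv 0 = invOfUnit (1 - X) 1 := by simp [factorInv, tv]
  rw [coeffQT, hP, hfactor₀, coeff_mul_invOfUnit_one_sub_X, hF]
  exact hasValueAtOne_partial_product n (by omega)

/-- Stabilization of coefficients: for every `i` and every odd `n ≥ 2i + 3`, the coefficient
of `q^i t^n` in `P(q,t)` equals the coefficient of `q^i` in the stable series `F(q)`. -/
theorem coeff_stabilizes (i n : ℕ) (hn : Odd n) (h : 2 * i + 3 ≤ n) :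
    coeffQT Pqt i n = PowerSeries.coeff (R := ℤ) i Fser :=
  coeff_stabilizes_general i n h
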